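/- arXiv:math/0504205 — 3 statements merged into one kernel-verified Lean document; each statement's English description precedes it below -/
import Mathlib

section
/- Theorem 5: Let G be a representable Menger (2,n)-semigroup and χ a binary relation on G. The following are equivalent: (i) χ is projection representable for G; (ii) χ is faithfully projection representable for G; (iii) χ is an l-regular and v-negative quasi-order. -/
universe u

/-- A partial `n`-place function on `A` (`none` = undefined). -/
abbrev NPlace (A : Type u) (n : ℕ) := (Fin n → A) → Option A

/-- The domain of a partial `n`-place function. -/
def pdom {A : Type u} {n : ℕ} (f : NPlace A n) : Set (Fin n → A) :=
  {a | (f a).isSome}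

/-- Superposition `f[g₁…gₙ]` of partial `n`-place functions. -/
def superpose {A : Type u} {n : ℕ} (f : NPlace A n) (g : Fin n → NPlace A n) : NPlace A n :=
  fun a => if h : ∀ i, (g i a).isSome then f (fun i => (g i a).get (h i)) else none

/-- The binary composition `f ∘ᵢ g` of partial `n`-place functions. -/
def opc {A : Type u} {n : ℕ} (i : Fin n) (f g : NPlace A n) : NPlace A n :=
  fun a => (g a).bind fun b => f (Function.update a i b)

/-- A Menger (2,n)-semigroup: an (n+1)-ary superassociative operation `sup`
(written `x[y₁…yₙ]`) together with `n` associative binary operations `op i`. -/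
structure MengerSg (G : Type u) (n : ℕ) where
  sup : G → (Fin n → G) → G
  op : Fin n → G → G → G
  superassoc : ∀ (x : G) (y z : Fin n → G),
    sup (sup x y) z = sup x fun i => sup (y i) z
  op_assoc : ∀ (i : Fin n) (x y z : G), op i (op i x y) z = op i x (op i y z)

namespace MengerSg

variable {G : Type u} {n : ℕ}

/-- Applying a composition string `L = [(i₁,y₁),…,(i_s,y_s)]` to `x`:
`x ∘_{i₁} y₁ ∘_{i₂} y₂ ⋯ ∘_{i_s} y_s` (left to right). -/
def applyStr (M : MengerSg G n) (x : G) (L : List (Fin n × G)) : G :=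
  L.foldl (fun a p => M.op p.1 a p.2) x

/-- `μᵢ(L)`: if `i` occurs in the composition string `L` with least position `k`,
this is `some (yₖ ∘_{i_{k+1}} y_{k+1} ⋯ ∘_{i_s} y_s)`; otherwise `none`. -/
def mu (M : MengerSg G n) (i : Fin n) : List (Fin n × G) → Option G
  | [] => none
  | p :: rest => if p.1 = i then some (applyStr M p.2 rest) else mu M i rest

/-- Conditions (4)–(7): the Menger (2,n)-semigroup is representable. -/
def Representable (M : MengerSg G n) : Prop :=
  (∀ L₁ L₂ : List (Fin n × G), L₁ ≠ [] → L₂ ≠ [] →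
      (∀ i, mu M i L₁ = mu M i L₂) → ∀ g, applyStr M g L₁ = applyStr M g L₂) ∧
  (∀ (i : Fin n) (x y : G) (z : Fin n → G),
      M.sup (M.op i x y) z = M.sup x (Function.update z i (M.sup y z))) ∧
  (∀ (i : Fin n) (x : G) (y : Fin n → G) (z : G),
      M.op i (M.sup x y) z = M.sup x fun j => M.op i (y j) z) ∧
  (∀ L : List (Fin n × G), L ≠ [] → ∀ m : Fin n → G,
      (∀ i, mu M i L = some (m i)) → ∀ x, applyStr M x L = M.sup x m)

/-- A binary relation is l-regular. -/
def LRegular (M : MengerSg G n) (r : G → G → Prop) : Prop :=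
  ∀ x y, r x y →
    (∀ z : Fin n → G, r (M.sup x z) (M.sup y z)) ∧
    (∀ (i : Fin n) (z : G), r (M.op i x z) (M.op i y z))

/-- A binary relation is l-cancellative. -/
def LCancellative (M : MengerSg G n) (r : G → G → Prop) : Prop :=
  (∀ (x y : G) (z : Fin n → G), r (M.sup x z) (M.sup y z) → r x y) ∧
  (∀ (x y : G) (i : Fin n) (z : G), r (M.op i x z) (M.op i y z) → r x y)

/-- A binary relation is v-negative. -/
def VNegative (M : MengerSg G n) (r : G → G → Prop) : Prop :=
  (∀ (x : G) (y : Fin n → G) (i : Fin n), r (M.sup x y) (y i)) ∧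
  (∀ (x : G) (L : List (Fin n × G)), L ≠ [] →
      ∀ (j : Fin n) (m : G), mu M j L = some m → r (applyStr M x L) m)

/-- A quasi-order is a reflexive and transitive relation. -/
def QuasiOrder (r : G → G → Prop) : Prop := Reflexive r ∧ Transitive r

/-- `z` is a zero of the Menger (2,n)-semigroup. -/
def IsZero (M : MengerSg G n) (z : G) : Prop :=
  (∀ (i : Fin n) (g : G), M.op i z g = z ∧ M.op i g z = z) ∧
  (∀ g : Fin n → G, M.sup z g = z) ∧
  (∀ (g : G) (gs : Fin n → G) (i : Fin n), M.sup g (Function.update gs i z) = z)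

/-- A 0-quasi-equivalence: a symmetric relation which is reflexive at every non-zero
element, and such that any zero related to something is related to itself. -/
def ZeroQuasiEquiv (M : MengerSg G n) (r : G → G → Prop) : Prop :=
  Symmetric r ∧ (∀ g, ¬ M.IsZero g → r g g) ∧
  (∀ z, M.IsZero z → (∃ h, r z h) → r z z)

/-- `P` is a representation of the Menger (2,n)-semigroup by `n`-place functions. -/
def IsRep (M : MengerSg G n) {A : Type u} (P : G → NPlace A n) : Prop :=
  (∀ (x : G) (y : Fin n → G), P (M.sup x y) = superpose (P x) fun i => P (y i)) ∧
  (∀ (i : Fin n) (x y : G), P (M.op i x y) = opc i (P x) (P y))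

/-- The set `Tₙ(G)` of translations: the least set of maps `G → G` containing the
identity and closed under `t ↦ (x ↦ a[b₁…b_{i−1} t(x) b_{i+1}…bₙ])`. -/
inductive IsTransl (M : MengerSg G n) : (G → G) → Prop
  | id : IsTransl M _root_.id
  | step (t : G → G) (ht : IsTransl M t) (i : Fin n) (a : G) (b : Fin n → G) :
      IsTransl M fun x => M.sup a (Function.update b i (t x))

/-- The relation `δ₁`: `g₁ = t(g₂)` for some `t ∈ Tₙ(G)`. -/
def delta1 (M : MengerSg G n) : G → G → Prop :=
  fun g₁ g₂ => ∃ t : G → G, IsTransl M t ∧ g₁ = t g₂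

/-- The relation `δ₂`: `g₁ = (x∘_{i₁}y₁⋯∘_{i_s}y_s)` and `g₂ = μᵢ(L)`, possibly both
superposed with a common `z̄ ∈ Gⁿ`. -/
def delta2 (M : MengerSg G n) : G → G → Prop :=
  fun g₁ g₂ => ∃ (x : G) (L : List (Fin n × G)) (i : Fin n) (m : G),
    L ≠ [] ∧ mu M i L = some m ∧
    ((g₁ = applyStr M x L ∧ g₂ = m) ∨
      ∃ z : Fin n → G, g₁ = M.sup (applyStr M x L) z ∧ g₂ = M.sup m z)

/-- `χ(π)`: the transitive closure of `(δ₂ ∪ Δ_G) ∘ δ₁ ∘ π` (relations applied right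
to left in the paper's notation, i.e. first `π`, then `δ₁`, then `δ₂ ∪ Δ_G`). -/
def chiRel (M : MengerSg G n) (π : G → G → Prop) : G → G → Prop :=
  Relation.TransGen
    (Relation.Comp (Relation.Comp π (delta1 M)) fun a b => delta2 M a b ∨ a = b)

/-- `χ₀`: the transitive closure of `(δ₂ ∪ Δ_G) ∘ δ₁`. -/
def chi0 (M : MengerSg G n) : G → G → Prop :=
  Relation.TransGen
    (Relation.Comp (delta1 M) fun a b => delta2 M a b ∨ a = b)

end MengerSg

open MengerSg

/-!
If `P` is a representation, domains can only shrink under superposition and under the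
compositions `∘ᵢ`, which makes `dom P(g₁) ⊆ dom P(g₂)` an l-regular, v-negative quasi-order.

Conversely, a representable Menger (2,n)-semigroup acts on profiles `c ∈ (G ∪ {∗})ⁿ`: a full
profile by superposition, and the profile `(μ₁(L), …, μₙ(L))` of a composition string `L` by
applying `L`. Conditions (4) and (7) make this action well defined, and (5), (6) make it a
representation. For each `u ∈ G`, keeping only the profiles whose value lies `χ`-above `u` is
again a representation, since by v-negativity and transitivity this property passes from a value
to the arguments it was computed from. The disjoint union of these representations over all `u`
is faithful and has domain inclusion exactly `χ`: the copy at `u = g₁` evaluated at the empty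
profile recovers `χ g₁ g₂`, and l-regularity gives the converse.
-/

section PartialFunctions

variable {A B U : Type u} {n : ℕ}

theorem mem_pdom {f : NPlace A n} {a : Fin n → A} : a ∈ pdom f ↔ ∃ v, f a = some v :=
  Option.isSome_iff_exists

theorem superpose_eq_some {f : NPlace A n} {g : Fin n → NPlace A n} {a : Fin n → A} {v : A} :
    superpose f g a = some v ↔ ∃ b, (∀ i, g i a = some (b i)) ∧ f b = some v := by
  unfold superpose
  split_ifs with h
  · refine ⟨fun hv => ⟨_, fun i => (Option.some_get (h i)).symm, hv⟩, ?_⟩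
    rintro ⟨b, hb, hv⟩
    convert hv using 2
    funext i
    simp [hb i]
  · refine iff_of_false (by simp) ?_
    rintro ⟨b, hb, -⟩
    exact h fun i => by simp [hb i]

theorem opc_eq_some {i : Fin n} {f g : NPlace A n} {a : Fin n → A} {v : A} :
    opc i f g a = some v ↔ ∃ b, g a = some b ∧ f (Function.update a i b) = some v :=
  Option.bind_eq_some_iff

theorem pdom_superpose_subset_pdom_superpose {f₁ f₂ : NPlace A n} (g : Fin n → NPlace A n)
    (h : pdom f₁ ⊆ pdom f₂) : pdom (superpose f₁ g) ⊆ pdom (superpose f₂ g) := by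
  intro a ha
  simp only [mem_pdom, superpose_eq_some] at ha ⊢
  obtain ⟨v, b, hb, hv⟩ := ha
  obtain ⟨w, hw⟩ := mem_pdom.1 (h (mem_pdom.2 ⟨v, hv⟩))
  exact ⟨w, b, hb, hw⟩

theorem pdom_opc_subset_pdom_opc {i : Fin n} {f₁ f₂ : NPlace A n} (g : NPlace A n)
    (h : pdom f₁ ⊆ pdom f₂) : pdom (opc i f₁ g) ⊆ pdom (opc i f₂ g) := by
  intro a ha
  simp only [mem_pdom, opc_eq_some] at ha ⊢
  obtain ⟨v, b, hb, hv⟩ := ha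
  obtain ⟨w, hw⟩ := mem_pdom.1 (h (mem_pdom.2 ⟨v, hv⟩))
  exact ⟨w, b, hb, hw⟩

theorem pdom_superpose_subset (f : NPlace A n) (g : Fin n → NPlace A n) (i : Fin n) :
    pdom (superpose f g) ⊆ pdom (g i) := by
  intro a ha
  simp only [mem_pdom, superpose_eq_some] at ha ⊢
  obtain ⟨v, b, hb, -⟩ := ha
  exact ⟨b i, hb i⟩

theorem pdom_opc_subset (i : Fin n) (f g : NPlace A n) : pdom (opc i f g) ⊆ pdom g := by
  intro a ha
  simp only [mem_pdom, opc_eq_some] at ha ⊢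
  obtain ⟨v, b, hb, -⟩ := ha
  exact ⟨b, hb⟩

open Classical in
noncomputable def filterValues (p : A → Prop) (f : NPlace A n) : NPlace A n :=
  fun a => (f a).filter fun v => p v

theorem filterValues_eq_some {p : A → Prop} {f : NPlace A n} {a : Fin n → A} {v : A} :
    filterValues p f a = some v ↔ f a = some v ∧ p v := by
  simp [filterValues, Option.filter_eq_some_iff]

theorem superpose_filterValues {p : A → Prop} {f : NPlace A n}
    (hf : ∀ b v i, f b = some v → p v → p (b i)) (g : Fin n → NPlace A n) :
    superpose (filterValues p f) (fun i => filterValues p (g i)) =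
      filterValues p (superpose f g) := by
  funext a
  refine Option.ext fun v => ?_
  simp only [superpose_eq_some, filterValues_eq_some]
  constructor
  · rintro ⟨b, hb, hv, hpv⟩
    exact ⟨⟨b, fun i => (hb i).1, hv⟩, hpv⟩
  · rintro ⟨⟨b, hb, hv⟩, hpv⟩
    exact ⟨b, fun i => ⟨hb i, hf b v i hv hpv⟩, hv, hpv⟩

theorem opc_filterValues {p : A → Prop} {f : NPlace A n}
    (hf : ∀ b v i, f b = some v → p v → p (b i)) (i : Fin n) (g : NPlace A n) :
    opc i (filterValues p f) (filterValues p g) = filterValues p (opc i f g) := by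
  funext a
  refine Option.ext fun v => ?_
  simp only [opc_eq_some, filterValues_eq_some]
  constructor
  · rintro ⟨b, ⟨hb, -⟩, hv, hpv⟩
    exact ⟨⟨b, hb, hv⟩, hpv⟩
  · rintro ⟨⟨b, hb, hv⟩, hpv⟩
    refine ⟨b, ⟨hb, ?_⟩, hv, hpv⟩
    simpa using hf _ v i hv hpv

variable [NeZero n]

open Classical in
/-- Disjoint union of a family of partial functions: defined only on tuples from a single
summand `{u} × B`, where it acts as `f u`. -/
noncomputable def psum (f : U → NPlace B n) : NPlace (U × B) n := fun a =>
  if ∀ i, (a i).1 = (a 0).1 then (f (a 0).1 fun i => (a i).2).map (Prod.mk (a 0).1) else none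

theorem psum_apply_mk (f : U → NPlace B n) (u : U) (c : Fin n → B) :
    psum f (fun i => (u, c i)) = (f u c).map (Prod.mk u) := by
  simp [psum]

theorem psum_apply_of_forall_ne (f : U → NPlace B n) {a : Fin n → U × B}
    (ha : ∀ u (c : Fin n → B), a ≠ fun i => (u, c i)) : psum f a = none := by
  rw [psum, if_neg]
  exact fun h => ha (a 0).1 (fun i => (a i).2) (funext fun i => Prod.ext (h i) rfl)

theorem psum_injective : Function.Injective (psum : (U → NPlace B n) → NPlace (U × B) n) := by
  intro f f' h
  funext u c
  have := congrFun h fun i => (u, c i)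
  rwa [psum_apply_mk, psum_apply_mk, (Option.map_injective (Prod.mk_right_injective u)).eq_iff]
    at this

theorem superpose_psum (f : U → NPlace B n) (g : Fin n → U → NPlace B n) :
    superpose (psum f) (fun i => psum (g i)) = psum fun u => superpose (f u) fun i => g i u := by
  funext a
  by_cases ha : ∃ u, ∃ c : Fin n → B, a = fun i => (u, c i)
  · obtain ⟨u, c, rfl⟩ := ha
    refine Option.ext fun v => ?_
    simp only [superpose_eq_some, psum_apply_mk, Option.map_eq_some_iff]
    constructor
    · rintro ⟨b, hb, hv⟩
      choose d hd hb using hb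
      obtain rfl : b = fun i => (u, d i) := funext fun i => (hb i).symm
      rw [psum_apply_mk, Option.map_eq_some_iff] at hv
      obtain ⟨w, hw, rfl⟩ := hv
      exact ⟨w, ⟨d, hd, hw⟩, rfl⟩
    · rintro ⟨w, ⟨d, hd, hw⟩, rfl⟩
      exact ⟨fun i => (u, d i), fun i => ⟨d i, hd i, rfl⟩, by simp [psum_apply_mk, hw]⟩
  · simp only [not_exists] at ha
    rw [psum_apply_of_forall_ne _ ha, superpose, dif_neg]
    simp [psum_apply_of_forall_ne _ ha]

theorem opc_psum (i : Fin n) (f g : U → NPlace B n) :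
    opc i (psum f) (psum g) = psum fun u => opc i (f u) (g u) := by
  funext a
  by_cases ha : ∃ u, ∃ c : Fin n → B, a = fun i => (u, c i)
  · obtain ⟨u, c, rfl⟩ := ha
    refine Option.ext fun v => ?_
    have hupd : ∀ d, Function.update (fun j => (u, c j)) i (u, d) =
        fun j => (u, Function.update c i d j) := fun d =>
      (Function.comp_update (Prod.mk u) c i d).symm
    simp only [opc_eq_some, psum_apply_mk, Option.map_eq_some_iff]
    constructor
    · rintro ⟨_, ⟨d, hd, rfl⟩, hv⟩
      rw [hupd, psum_apply_mk, Option.map_eq_some_iff] at hv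
      obtain ⟨w, hw, rfl⟩ := hv
      exact ⟨w, ⟨d, hd, hw⟩, rfl⟩
    · rintro ⟨w, ⟨d, hd, hw⟩, rfl⟩
      exact ⟨(u, d), ⟨d, hd, rfl⟩, by rw [hupd, psum_apply_mk, hw]; rfl⟩
  · simp only [not_exists] at ha
    rw [psum_apply_of_forall_ne _ ha, opc, psum_apply_of_forall_ne _ ha, Option.bind_none]

theorem pdom_psum_subset_pdom_psum_iff {f f' : U → NPlace B n} :
    pdom (psum f) ⊆ pdom (psum f') ↔ ∀ u, pdom (f u) ⊆ pdom (f' u) := by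
  have hmem : ∀ (f : U → NPlace B n) u c, (fun i => (u, c i)) ∈ pdom (psum f) ↔ c ∈ pdom (f u) :=
    fun f u c => by simp [pdom, psum_apply_mk]
  constructor
  · intro h u c hc
    exact (hmem f' u c).1 (h ((hmem f u c).2 hc))
  · intro h a ha
    by_cases ha' : ∃ u, ∃ c : Fin n → B, a = fun i => (u, c i)
    · obtain ⟨u, c, rfl⟩ := ha'
      exact (hmem f' u c).2 (h u ((hmem f u c).1 ha))
    · simp only [not_exists] at ha'
      simp [pdom, psum_apply_of_forall_ne _ ha'] at ha

end PartialFunctions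

namespace MengerSg

variable {G : Type u} {n : ℕ} {M : MengerSg G n}

section Conditions

variable {A : Type u} {P : G → NPlace A n}

theorem IsRep.pdom_applyStr_subset (hP : M.IsRep P) {a b : G} (h : pdom (P a) ⊆ pdom (P b))
    (L : List (Fin n × G)) : pdom (P (M.applyStr a L)) ⊆ pdom (P (M.applyStr b L)) := by
  induction L generalizing a b with
  | nil => exact h
  | cons p L ih => exact ih (by rw [hP.2, hP.2]; exact pdom_opc_subset_pdom_opc _ h)

theorem IsRep.pdom_applyStr_subset_of_mu_eq_some (hP : M.IsRep P) (x : G)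
    {L : List (Fin n × G)} {j : Fin n} {m : G} (h : M.mu j L = some m) :
    pdom (P (M.applyStr x L)) ⊆ pdom (P m) := by
  induction L generalizing x with
  | nil => cases h
  | cons p L ih =>
    rw [mu] at h
    split_ifs at h
    · cases h
      exact hP.pdom_applyStr_subset (by rw [hP.2]; exact pdom_opc_subset _ _ _) L
    · exact ih _ h

theorem IsRep.lRegular (hP : M.IsRep P) : M.LRegular fun g₁ g₂ => pdom (P g₁) ⊆ pdom (P g₂) :=
  fun _ _ h =>
    ⟨fun _ => by dsimp only; rw [hP.1, hP.1]; exact pdom_superpose_subset_pdom_superpose _ h,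
      fun _ _ => by dsimp only; rw [hP.2, hP.2]; exact pdom_opc_subset_pdom_opc _ h⟩

theorem IsRep.vNegative (hP : M.IsRep P) :
    M.VNegative fun g₁ g₂ => pdom (P g₁) ⊆ pdom (P g₂) :=
  ⟨fun x y i => by dsimp only; rw [hP.1]; exact pdom_superpose_subset _ _ i,
    fun x _ _ _ _ h => hP.pdom_applyStr_subset_of_mu_eq_some x h⟩

theorem IsRep.conditions (hP : M.IsRep P) {χ : G → G → Prop}
    (hχ : ∀ g₁ g₂, χ g₁ g₂ ↔ pdom (P g₁) ⊆ pdom (P g₂)) :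
    QuasiOrder χ ∧ M.LRegular χ ∧ M.VNegative χ := by
  obtain rfl : χ = fun g₁ g₂ => pdom (P g₁) ⊆ pdom (P g₂) := by
    funext g₁ g₂
    exact propext (hχ g₁ g₂)
  exact ⟨⟨fun _ => subset_rfl, fun _ _ _ => Set.Subset.trans⟩, hP.lRegular, hP.vNegative⟩

end Conditions

section Strings

theorem exists_mu_eq_some {L : List (Fin n × G)} (hL : L ≠ []) : ∃ i m, M.mu i L = some m := by
  obtain ⟨p, L, rfl⟩ := List.exists_cons_of_ne_nil hL
  exact ⟨p.1, M.applyStr p.2 L, if_pos rfl⟩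

theorem ne_nil_of_mu_eq_some {L : List (Fin n × G)} {i : Fin n} {m : G}
    (h : M.mu i L = some m) : L ≠ [] := by
  rintro rfl
  cases h

theorem mu_cons_self (i : Fin n) (y : G) (L : List (Fin n × G)) :
    (fun j => M.mu j ((i, y) :: L)) =
      Function.update (fun j => M.mu j L) i (some (M.applyStr y L)) := by
  funext j
  rcases eq_or_ne j i with rfl | hj
  · simp [mu]
  · simp [mu, Ne.symm hj, hj]

theorem applyStr_sup (hM : M.Representable) (L : List (Fin n × G)) (x : G) (y : Fin n → G) :
    M.applyStr (M.sup x y) L = M.sup x fun j => M.applyStr (y j) L := by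
  induction L generalizing y with
  | nil => rfl
  | cons p L ih => exact (congrArg (M.applyStr · L) (hM.2.2.1 p.1 x y p.2)).trans (ih _)

theorem applyStr_rel {χ : G → G → Prop} (hreg : M.LRegular χ) {a b : G} (h : χ a b)
    (L : List (Fin n × G)) : χ (M.applyStr a L) (M.applyStr b L) := by
  induction L generalizing a b with
  | nil => exact h
  | cons p L ih => exact ih ((hreg a b h).2 p.1 p.2)

end Strings

/-- `IsEval M x c w`: `w` is the value of `x` at the profile `c`, where `some a` at position
`i` stands for the constant `a` and `none` for the `i`-th variable. A full profile evaluates by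
superposition; the profile `(μ₁(L), …, μₙ(L))` of a string `L` (all `none` for `L = []`)
evaluates by applying `L`. -/
inductive IsEval (M : MengerSg G n) (x : G) : (Fin n → Option G) → G → Prop
  | full (m : Fin n → G) : IsEval M x (some ∘ m) (M.sup x m)
  | string (L : List (Fin n × G)) : IsEval M x (fun i => M.mu i L) (M.applyStr x L)

section Evaluation

variable {x : G} {c : Fin n → Option G} {w : G}

theorem isEval_none (x : G) : M.IsEval x (fun _ => none) x :=
  IsEval.string []

theorem IsEval.exists_isEval {y v : G} (h : M.IsEval y c v) (x : G) : ∃ w, M.IsEval x c w := by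
  cases h
  exacts [⟨_, .full _⟩, ⟨_, .string _⟩]

theorem IsEval.exists_op (hM : M.Representable) {y v : G} (h : M.IsEval y c v) (i : Fin n)
    (x : G) : ∃ w, M.IsEval (M.op i x y) c w ∧ M.IsEval x (Function.update c i (some v)) w := by
  cases h with
  | full m =>
    refine ⟨_, .full m, ?_⟩
    rw [hM.2.1, ← Function.comp_update]
    exact .full _
  | string L =>
    refine ⟨_, .string L, ?_⟩
    rw [← mu_cons_self]
    exact .string ((i, y) :: L)

theorem IsEval.rel_of_eq_some {χ : G → G → Prop} (hneg : M.VNegative χ) (h : M.IsEval x c w)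
    {i : Fin n} {v : G} (hi : c i = some v) : χ w v := by
  cases h with
  | full m =>
    cases hi
    exact hneg.1 x m i
  | string L => exact hneg.2 x L (ne_nil_of_mu_eq_some hi) i v hi

variable [NeZero n]

theorem IsEval.eq_sup (hM : M.Representable) {m : Fin n → G} (h : M.IsEval x (some ∘ m) w) :
    w = M.sup x m := by
  generalize hc : some ∘ m = c at h
  cases h with
  | full m' => rw [(Option.some_injective G).comp_left hc]
  | string L =>
    have hmu : ∀ i, M.mu i L = some (m i) := fun i => (congrFun hc i).symm
    exact hM.2.2.2 L (ne_nil_of_mu_eq_some (hmu 0)) m hmu x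

theorem IsEval.eq_applyStr (hM : M.Representable) {L : List (Fin n × G)}
    (h : M.IsEval x (fun i => M.mu i L) w) : w = M.applyStr x L := by
  generalize hc : (fun i => M.mu i L) = c at h
  cases h with
  | full m =>
    have hmu : ∀ i, M.mu i L = some (m i) := congrFun hc
    exact (hM.2.2.2 L (ne_nil_of_mu_eq_some (hmu 0)) m hmu x).symm
  | string L' =>
    -- (4) only speaks about nonempty strings; `[]` is the only string with the empty profile.
    rcases eq_or_ne L [] with rfl | hL
    · obtain rfl : L' = [] := by
        by_contra hL'
        obtain ⟨i, m, hm⟩ := exists_mu_eq_some (M := M) hL'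
        cases (congrFun hc i).trans hm
      rfl
    · have hL' : L' ≠ [] := by
        obtain ⟨i, m, hm⟩ := exists_mu_eq_some (M := M) hL
        exact ne_nil_of_mu_eq_some ((congrFun hc i).symm.trans hm)
      exact hM.1 L' L hL' hL (fun i => (congrFun hc i).symm) x

theorem IsEval.unique (hM : M.Representable) {w' : G} (h : M.IsEval x c w)
    (h' : M.IsEval x c w') : w = w' := by
  cases h with
  | full m => exact (h'.eq_sup hM).symm
  | string L => exact (h'.eq_applyStr hM).symm

theorem isEval_sup (hM : M.Representable) (x : G) {y v : Fin n → G}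
    (h : ∀ i, M.IsEval (y i) c (v i)) : M.IsEval (M.sup x y) c (M.sup x v) := by
  have h0 := h 0
  generalize v 0 = v₀ at h0
  rcases h0 with m | L
  · obtain rfl : v = fun i => M.sup (y i) m := funext fun i => (h i).eq_sup hM
    rw [← M.superassoc]
    exact .full m
  · obtain rfl : v = fun i => M.applyStr (y i) L := funext fun i => (h i).eq_applyStr hM
    rw [← applyStr_sup hM]
    exact .string L

theorem IsEval.rel (hM : M.Representable) {χ : G → G → Prop} (hreg : M.LRegular χ)
    {g₁ g₂ v₁ v₂ : G} (hχ : χ g₁ g₂) (h₁ : M.IsEval g₁ c v₁) (h₂ : M.IsEval g₂ c v₂) :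
    χ v₁ v₂ := by
  cases h₁ with
  | full m => exact h₂.eq_sup hM ▸ (hreg _ _ hχ).1 m
  | string L => exact h₂.eq_applyStr hM ▸ applyStr_rel hreg hχ L

end Evaluation

section Construction

variable [NeZero n] {c : Fin n → Option G}

open Classical in
noncomputable def evalRep (M : MengerSg G n) (g : G) : NPlace (Option G) n := fun c =>
  if h : ∃ w, M.IsEval g c w then some (some h.choose) else none

theorem evalRep_eq_some (hM : M.Representable) {g : G} {b : Option G} :
    M.evalRep g c = some b ↔ ∃ w, M.IsEval g c w ∧ b = some w := by
  unfold evalRep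
  split_ifs with h
  · refine ⟨fun hb => ⟨_, h.choose_spec, (Option.some_injective _ hb).symm⟩, ?_⟩
    rintro ⟨w, hw, rfl⟩
    rw [h.choose_spec.unique hM hw]
  · simp only [false_iff]
    rintro ⟨w, hw, -⟩
    exact h ⟨w, hw⟩

theorem isRep_evalRep (hM : M.Representable) : M.IsRep M.evalRep := by
  constructor
  · intro x y
    funext c
    refine Option.ext fun b => ?_
    simp only [superpose_eq_some, evalRep_eq_some hM]
    constructor
    · rintro ⟨w, hw, rfl⟩
      choose v hv using fun i => hw.exists_isEval (y i)
      refine ⟨some ∘ v, fun i => ⟨v i, hv i, rfl⟩, _, .full v, ?_⟩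
      rw [hw.unique hM (isEval_sup hM x hv)]
    · rintro ⟨d, hd, w, hw, rfl⟩
      choose v hv hd using hd
      obtain rfl : d = some ∘ v := funext hd
      exact ⟨w, hw.eq_sup hM ▸ isEval_sup hM x hv, rfl⟩
  · intro i x y
    funext c
    refine Option.ext fun b => ?_
    simp only [opc_eq_some, evalRep_eq_some hM]
    constructor
    · rintro ⟨w, hw, rfl⟩
      obtain ⟨v, hv⟩ := hw.exists_isEval y
      obtain ⟨w', hw', hx⟩ := hv.exists_op hM i x
      exact ⟨some v, ⟨v, hv, rfl⟩, w, hw'.unique hM hw ▸ hx, rfl⟩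
    · rintro ⟨_, ⟨v, hv, rfl⟩, w, hw, rfl⟩
      obtain ⟨w', hw', hx⟩ := hv.exists_op hM i x
      exact ⟨w, hx.unique hM hw ▸ hw', rfl⟩

noncomputable def projRep (M : MengerSg G n) (χ : G → G → Prop) (g : G) :
    NPlace (G × Option G) n :=
  psum fun u => filterValues (fun b => ∀ w ∈ b, χ u w) (M.evalRep g)

variable {χ : G → G → Prop}

theorem mem_pdom_filterValues_evalRep (hM : M.Representable) {u g : G} :
    c ∈ pdom (filterValues (fun b => ∀ w ∈ b, χ u w) (M.evalRep g)) ↔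
      ∃ w, M.IsEval g c w ∧ χ u w := by
  simp only [mem_pdom, filterValues_eq_some, evalRep_eq_some hM]
  constructor
  · rintro ⟨_, ⟨w, hw, rfl⟩, hu⟩
    exact ⟨w, hw, hu w rfl⟩
  · rintro ⟨w, hw, hu⟩
    exact ⟨some w, ⟨w, hw, rfl⟩, fun w' hw' => by cases hw'; exact hu⟩

theorem isRep_projRep (hM : M.Representable) (hq : QuasiOrder χ) (hneg : M.VNegative χ) :
    M.IsRep (M.projRep χ) := by
  have hclosed : ∀ u x d b i, M.evalRep x d = some b → (∀ w ∈ b, χ u w) →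
      ∀ w ∈ d i, χ u w := by
    intro u x d b i hb hu v hv
    obtain ⟨w, hw, rfl⟩ := (evalRep_eq_some hM).1 hb
    exact hq.2 (hu w rfl) (hw.rel_of_eq_some hneg hv)
  constructor
  · intro x y
    simp only [projRep, superpose_psum,
      superpose_filterValues (hclosed _ x), (isRep_evalRep hM).1 x y]
  · intro i x y
    simp only [projRep, opc_psum, opc_filterValues (hclosed _ x), (isRep_evalRep hM).2 i x y]

theorem pdom_projRep_subset_iff (hM : M.Representable) (hq : QuasiOrder χ)
    (hreg : M.LRegular χ) {g₁ g₂ : G} :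
    pdom (M.projRep χ g₁) ⊆ pdom (M.projRep χ g₂) ↔ χ g₁ g₂ := by
  rw [projRep, projRep, pdom_psum_subset_pdom_psum_iff]
  simp only [Set.subset_def, mem_pdom_filterValues_evalRep hM]
  constructor
  · intro h
    obtain ⟨w, hw, hχ⟩ := h g₁ _ ⟨g₁, isEval_none g₁, hq.1 g₁⟩
    rwa [hw.unique hM (isEval_none g₂)] at hχ
  · rintro hχ u c ⟨w, hw, hu⟩
    obtain ⟨w', hw'⟩ := hw.exists_isEval g₂
    exact ⟨w', hw', hq.2 hu (hw.rel hM hreg hχ hw')⟩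

theorem projRep_injective (hM : M.Representable) (hq : QuasiOrder χ) :
    Function.Injective (M.projRep χ) := by
  intro g₁ g₂ h
  have h₁₂ := congrFun (congrFun (psum_injective h) g₁) fun _ => none
  have h₁ : filterValues (fun b => ∀ w ∈ b, χ g₁ w) (M.evalRep g₁) (fun _ => none) =
      some (some g₁) :=
    filterValues_eq_some.2 ⟨(evalRep_eq_some hM).2 ⟨g₁, isEval_none g₁, rfl⟩,
      fun w hw => by cases hw; exact hq.1 g₁⟩
  rw [h₁, eq_comm, filterValues_eq_some, evalRep_eq_some hM] at h₁₂
  obtain ⟨⟨w, hw, hw₁⟩, -⟩ := h₁₂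
  cases hw₁
  exact hw.unique hM (isEval_none g₂)

end Construction

end MengerSg

/-- Theorem 5: a single relation χ. -/
theorem theorem5 {G : Type u} {n : ℕ} (hn : 1 ≤ n)
    (M : MengerSg G n) (hM : M.Representable) (χ : G → G → Prop) :
    ((∃ (A : Type u) (P : G → NPlace A n), M.IsRep P ∧
        ∀ g₁ g₂, χ g₁ g₂ ↔ pdom (P g₁) ⊆ pdom (P g₂)) ↔
      (QuasiOrder χ ∧ M.LRegular χ ∧ M.VNegative χ)) ∧
    ((∃ (A : Type u) (P : G → NPlace A n), M.IsRep P ∧ Function.Injective P ∧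
        ∀ g₁ g₂, χ g₁ g₂ ↔ pdom (P g₁) ⊆ pdom (P g₂)) ↔
      (QuasiOrder χ ∧ M.LRegular χ ∧ M.VNegative χ)) := by
  have : NeZero n := ⟨by omega⟩
  have faithful : QuasiOrder χ ∧ M.LRegular χ ∧ M.VNegative χ →
      ∃ (A : Type u) (P : G → NPlace A n), M.IsRep P ∧ Function.Injective P ∧
        ∀ g₁ g₂, χ g₁ g₂ ↔ pdom (P g₁) ⊆ pdom (P g₂) := fun ⟨hq, hreg, hneg⟩ =>
    ⟨_, M.projRep χ, isRep_projRep hM hq hneg, projRep_injective hM hq,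
      fun _ _ => (pdom_projRep_subset_iff hM hq hreg).symm⟩
  refine ⟨⟨fun ⟨_, _, hP, hχ⟩ => hP.conditions hχ, fun h => ?_⟩,
    ⟨fun ⟨_, _, hP, _, hχ⟩ => hP.conditions hχ, faithful⟩⟩
  obtain ⟨A, P, hP, -, hχ⟩ := faithful h
  exact ⟨A, P, hP, hχ⟩
end

section
/- Let G be a representable Menger (2,n)-semigroup. If a binary relation ρ on G contains δ₁ and δ₂, then ρ is v-negative; conversely, every l-regular, v-negative quasi-order on G contains both δ₁ and δ₂. -/
universe u

namespace MengerSg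

variable {G : Type u} {n : ℕ} (M : MengerSg G n)

theorem delta1_sup (x : G) (y : Fin n → G) (i : Fin n) : M.delta1 (M.sup x y) (y i) :=
  ⟨fun z => M.sup x (Function.update y i z), .step _ .id i x y, by simp⟩

theorem delta2_applyStr (x : G) {L : List (Fin n × G)} (hL : L ≠ []) {j : Fin n} {m : G}
    (hm : M.mu j L = some m) : M.delta2 (M.applyStr x L) m :=
  ⟨x, L, j, m, hL, hm, .inl ⟨rfl, rfl⟩⟩

variable {M}

theorem vNegative_of_delta_le {ρ : G → G → Prop} (h₁ : ∀ a b, M.delta1 a b → ρ a b)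
    (h₂ : ∀ a b, M.delta2 a b → ρ a b) : M.VNegative ρ :=
  ⟨fun x y i => h₁ _ _ (M.delta1_sup x y i),
    fun x _ hL _ _ hm => h₂ _ _ (M.delta2_applyStr x hL hm)⟩

namespace VNegative

variable {χ : G → G → Prop}

theorem rel_of_isTransl (hv : M.VNegative χ) (hq : QuasiOrder χ) {t : G → G}
    (ht : IsTransl M t) (g : G) : χ (t g) g := by
  induction ht with
  | id => exact hq.1 g
  | step t _ i a b ih => exact hq.2 (by simpa using hv.1 a (Function.update b i (t g)) i) ih

theorem delta1_le (hv : M.VNegative χ) (hq : QuasiOrder χ) (a b : G) (h : M.delta1 a b) :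
    χ a b := by
  obtain ⟨t, ht, rfl⟩ := h
  exact hv.rel_of_isTransl hq ht b

theorem delta2_le (hv : M.VNegative χ) (hl : M.LRegular χ) (a b : G) (h : M.delta2 a b) :
    χ a b := by
  obtain ⟨x, L, i, m, hL, hm, ⟨rfl, rfl⟩ | ⟨z, rfl, rfl⟩⟩ := h
  · exact hv.2 x L hL i _ hm
  · exact (hl _ _ (hv.2 x L hL i _ hm)).1 z

end VNegative

end MengerSg

open MengerSg

theorem vNegative_iff_contains_deltas_general {G : Type u} {n : ℕ}
    (M : MengerSg G n) :
    (∀ ρ : G → G → Prop, (∀ a b, delta1 M a b → ρ a b) →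
        (∀ a b, delta2 M a b → ρ a b) → M.VNegative ρ) ∧
      ∀ χ : G → G → Prop, QuasiOrder χ → M.LRegular χ → M.VNegative χ →
        (∀ a b, delta1 M a b → χ a b) ∧ (∀ a b, delta2 M a b → χ a b) :=
  ⟨fun _ h₁ h₂ => vNegative_of_delta_le h₁ h₂,
    fun _ hq hl hv => ⟨hv.delta1_le hq, hv.delta2_le hl⟩⟩

/-- A relation containing δ₁ and δ₂ is v-negative; conversely, every l-regular and
v-negative quasi-order contains both δ₁ and δ₂. -/
theorem vNegative_iff_contains_deltas {G : Type u} {n : ℕ} (hn : 1 ≤ n)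
    (M : MengerSg G n) (hM : M.Representable) :
    (∀ ρ : G → G → Prop, (∀ a b, delta1 M a b → ρ a b) →
        (∀ a b, delta2 M a b → ρ a b) → M.VNegative ρ) ∧
      ∀ χ : G → G → Prop, QuasiOrder χ → M.LRegular χ → M.VNegative χ →
        (∀ a b, delta1 M a b → χ a b) ∧ (∀ a b, delta2 M a b → χ a b) :=
  vNegative_iff_contains_deltas_general M
end

section
/- Let G be a representable Menger (2,n)-semigroup. Then δ₁ is an l-regular quasi-order on G, and δ₂ is an l-regular relation on G. -/
universe u

open MengerSg

namespace MengerSg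

variable {G : Type u} {n : ℕ} {M : MengerSg G n}

theorem IsTransl.comp {t s : G → G} (ht : IsTransl M t) (hs : IsTransl M s) :
    IsTransl M (t ∘ s) := by
  induction ht with
  | id => exact hs
  | step t' _ i a b ih => exact .step _ ih i a b

/-- Both `· [z̄]` (by superassociativity) and `· ∘ᵢ z` (by condition (6)) commute with the
outer superposition, so they can be pushed through a translation layer by layer. -/
theorem IsTransl.exists_semiconj {φ : G → G}
    (hφ : ∀ a (b : Fin n → G), φ (M.sup a b) = M.sup a (φ ∘ b))
    {t : G → G} (ht : IsTransl M t) : ∃ t', IsTransl M t' ∧ Function.Semiconj φ t t' := by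
  induction ht with
  | id => exact ⟨_root_.id, .id, fun _ => rfl⟩
  | step s _ i a b ih =>
    obtain ⟨s', hs', hsemi⟩ := ih
    refine ⟨fun w => M.sup a (Function.update (φ ∘ b) i (s' w)), .step s' hs' i a _,
      fun y => ?_⟩
    simp only [hφ, ← hsemi y, Function.comp_update]

theorem delta1_quasiOrder (M : MengerSg G n) : QuasiOrder (delta1 M) := by
  refine ⟨fun g => ⟨_root_.id, .id, rfl⟩, ?_⟩
  rintro _ _ _ ⟨t, ht, rfl⟩ ⟨s, hs, rfl⟩
  exact ⟨t ∘ s, ht.comp hs, rfl⟩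

theorem delta1_map {φ : G → G} (hφ : ∀ a (b : Fin n → G), φ (M.sup a b) = M.sup a (φ ∘ b))
    {x y : G} (h : delta1 M x y) : delta1 M (φ x) (φ y) := by
  obtain ⟨t, ht, rfl⟩ := h
  obtain ⟨t', ht', hsemi⟩ := ht.exists_semiconj hφ
  exact ⟨t', ht', hsemi y⟩

theorem lRegular_delta1
    (hop : ∀ (i : Fin n) (x : G) (y : Fin n → G) (z : G),
      M.op i (M.sup x y) z = M.sup x fun j => M.op i (y j) z) :
    M.LRegular (delta1 M) :=
  fun _ _ h => ⟨fun z => delta1_map (φ := (M.sup · z)) (fun a b => M.superassoc a b z) h,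
    fun i z => delta1_map (φ := (M.op i · z)) (fun a b => hop i a b z) h⟩

theorem applyStr_append (x : G) (L L' : List (Fin n × G)) :
    applyStr M x (L ++ L') = applyStr M (applyStr M x L) L' :=
  List.foldl_append

theorem mu_append_of_mu_eq_some {i : Fin n} {L : List (Fin n × G)} {m : G}
    (h : mu M i L = some m) (L' : List (Fin n × G)) :
    mu M i (L ++ L') = some (applyStr M m L') := by
  induction L with
  | nil => simp [mu] at h
  | cons p rest ih =>
    by_cases hp : p.1 = i
    · rw [mu, if_pos hp, Option.some_inj] at h
      rw [List.cons_append, mu, if_pos hp, applyStr_append, h]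
    · rw [mu, if_neg hp] at h
      rw [List.cons_append, mu, if_neg hp]
      exact ih h

theorem delta2_sup {g₁ g₂ : G} (h : delta2 M g₁ g₂) (z : Fin n → G) :
    delta2 M (M.sup g₁ z) (M.sup g₂ z) := by
  obtain ⟨x, L, i, m, hL, hmu, ⟨rfl, rfl⟩ | ⟨w, rfl, rfl⟩⟩ := h
  · exact ⟨x, L, i, _, hL, hmu, .inr ⟨z, rfl, rfl⟩⟩
  · exact ⟨x, L, i, _, hL, hmu, .inr ⟨fun j => M.sup (w j) z, M.superassoc _ _ _,
      M.superassoc _ _ _⟩⟩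

/-- Without superposition, `(j, z)` is appended to the composition string; with it,
condition (6) moves `∘ⱼ z` inside the superposition. -/
theorem delta2_op
    (hop : ∀ (i : Fin n) (x : G) (y : Fin n → G) (z : G),
      M.op i (M.sup x y) z = M.sup x fun j => M.op i (y j) z)
    {g₁ g₂ : G} (h : delta2 M g₁ g₂) (j : Fin n) (z : G) :
    delta2 M (M.op j g₁ z) (M.op j g₂ z) := by
  obtain ⟨x, L, i, m, hL, hmu, ⟨rfl, rfl⟩ | ⟨w, rfl, rfl⟩⟩ := h
  · exact ⟨x, L ++ [(j, z)], i, _, by simp, mu_append_of_mu_eq_some hmu _,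
      .inl ⟨(applyStr_append (M := M) x L [(j, z)]).symm, rfl⟩⟩
  · exact ⟨x, L, i, _, hL, hmu, .inr ⟨fun k => M.op j (w k) z, hop _ _ _ _, hop _ _ _ _⟩⟩

end MengerSg

theorem delta1_delta2_lRegular_general {G : Type u} {n : ℕ}
    (M : MengerSg G n) (hM : M.Representable) :
    (QuasiOrder (delta1 M) ∧ M.LRegular (delta1 M)) ∧ M.LRegular (delta2 M) := by
  have hop := hM.2.2.1
  exact ⟨⟨delta1_quasiOrder M, lRegular_delta1 hop⟩,
    fun _ _ h => ⟨delta2_sup h, delta2_op hop h⟩⟩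

/-- δ₁ is an l-regular quasi-order, and δ₂ is an l-regular relation. -/
theorem delta1_delta2_lRegular {G : Type u} {n : ℕ} (hn : 1 ≤ n)
    (M : MengerSg G n) (hM : M.Representable) :
    (QuasiOrder (delta1 M) ∧ M.LRegular (delta1 M)) ∧ M.LRegular (delta2 M) :=
  delta1_delta2_lRegular_general M hM
end
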